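/- For any fixed positive constants and exponent p > 1, the supremum Ω(ε̲) of values ω > 0 satisfying m₁ + m₀ > 2(6ω)^{(p−1)/2} + (6ω)^{p−1}/ε̲ and ε̲ − 2(m₁ + m₀) > √(6ω)·δ' + (n/(2ε̲))Σᵢ γᵢ²(6ω)^i, with m₁ = m₀ = ε̲/6, tends to +∞ as ε̲ → +∞. -/

import Mathlib

/-! For any fixed `ω`, both constraints have the shape `a + b / ε̲ < ε̲ / 3` with `a`, `b`
independent of `ε̲`, so they hold for all large `ε̲`; taking `ω = |C| + 1` gives the claim. -/

open Filter Topology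

theorem eventually_add_div_lt_const_mul (a b : ℝ) {c : ℝ} (hc : 0 < c) :
    ∀ᶠ x in atTop, a + b / x < c * x := by
  have hbounded : Tendsto (fun x : ℝ => a + b / x) atTop (𝓝 (a + 0)) :=
    tendsto_const_nhds.add (tendsto_const_nhds.div_atTop tendsto_id)
  have hgap : Tendsto (fun x : ℝ => c * x + -(a + b / x)) atTop atTop :=
    (tendsto_id.const_mul_atTop hc).atTop_add hbounded.neg
  filter_upwards [hgap.eventually_gt_atTop 0] with x hx
  linarith

theorem stmt_15_general (p : ℝ) (n : ℕ) (γ : ℕ → ℝ) (δ' : ℝ) :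
    ∀ C : ℝ, ∃ E : ℝ, ∀ εlb : ℝ, E ≤ εlb →
      ∃ ω : ℝ, C < ω ∧ 0 < ω ∧
        2 * (6 * ω) ^ ((p - 1) / 2) + (6 * ω) ^ (p - 1) / εlb < εlb / 6 + εlb / 6 ∧
        Real.sqrt (6 * ω) * δ'
            + (n / (2 * εlb)) * ∑ i ∈ Finset.Icc 1 n, (γ i) ^ 2 * (6 * ω) ^ (i : ℕ)
          < εlb - 2 * (εlb / 6 + εlb / 6) := by
  intro C
  set ω : ℝ := |C| + 1
  set S : ℝ := ∑ i ∈ Finset.Icc 1 n, (γ i) ^ 2 * (6 * ω) ^ (i : ℕ)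
  have hgain := eventually_add_div_lt_const_mul
    (2 * (6 * ω) ^ ((p - 1) / 2)) ((6 * ω) ^ (p - 1)) (by norm_num : (0 : ℝ) < 1 / 3)
  have hcross := eventually_add_div_lt_const_mul
    (Real.sqrt (6 * ω) * δ') (n * S / 2) (by norm_num : (0 : ℝ) < 1 / 3)
  obtain ⟨E, hE⟩ := eventually_atTop.1 (hgain.and hcross)
  refine ⟨E, fun εlb hεlb => ⟨ω, by linarith [le_abs_self C], by positivity, ?_, ?_⟩⟩
  · linarith [(hE εlb hεlb).1]
  · have hrewrite : (n / (2 * εlb)) * S = n * S / 2 / εlb := by ring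
    linarith [(hE εlb hεlb).2]

/-- The supremum `Ω(ε̲)` of admissible values `ω` (with gains `m₁ = m₀ = ε̲/6`)
tends to `+∞` as `ε̲ → +∞`: for every bound `C`, for all sufficiently large `ε̲`
there is an admissible `ω > C`. -/
theorem stmt_15 (p : ℝ) (hp : 1 < p) (n : ℕ) (γ : ℕ → ℝ) (δ' : ℝ) (hδ' : 0 < δ') :
    ∀ C : ℝ, ∃ E : ℝ, ∀ εlb : ℝ, E ≤ εlb →
      ∃ ω : ℝ, C < ω ∧ 0 < ω ∧
        2 * (6 * ω) ^ ((p - 1) / 2) + (6 * ω) ^ (p - 1) / εlb < εlb / 6 + εlb / 6 ∧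
        Real.sqrt (6 * ω) * δ'
            + (n / (2 * εlb)) * ∑ i ∈ Finset.Icc 1 n, (γ i) ^ 2 * (6 * ω) ^ (i : ℕ)
          < εlb - 2 * (εlb / 6 + εlb / 6) :=
  stmt_15_general p n γ δ'
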